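/- Let K be an algebraically closed field of characteristic 0. Let z, q_1, q_2, q_3 be nonzero vectors in K^3 such that q_1, q_2, q_3 are pairwise non-proportional and z is not proportional to any q_i (i.e., they are four points of ℙ^2 with z distinct from each q_i). Then there exists a nonzero homogeneous cubic form f ∈ K[x_0, x_1, x_2] with f(z) = 0 and all three first-order partial derivatives of f vanishing at q_1, at q_2 and at q_3, if and only if q_1, q_2, q_3 are linearly dependent (i.e., the three points are collinear in ℙ^2) or z lies in the span of q_i and q_j for some pair i < j (i.e., z lies on one of the lines ⟨q_1,q_2⟩, ⟨q_1,q_3⟩, ⟨q_2,q_3⟩). -/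

import Mathlib

/-!
If `z` lies on the line `⟨q i, q j⟩`, the triangle `⟨q i, q j⟩ ⟨q i, q k⟩ ⟨q j, q k⟩` is such a
cubic, since each vertex lies on two of its sides; if the `q m` lie on a line `L`, then `L²`
times any line through `z` is one.

Conversely, let `q 0, q 1, q 2` be a basis and pull such a cubic `f` back along
`x ↦ ∑ x m • q m`. The pulled-back cubic `g` is singular at the coordinate points, so the
coefficient of `x_m² x_i` in `g`, which is (up to a nonzero integer) `∂g/∂x_i` evaluated at `e_m`,
vanishes. The only remaining monomial is `x_0 x_1 x_2`, and `g` vanishes at the coordinate vector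
of `z`, none of whose entries is zero because `z` is on none of the three lines. Hence `g = 0`,
and so `f = 0`.
-/

open MvPolynomial Module

namespace MvPolynomial

variable {R σ τ ι : Type*}

def IsSingularAt [CommSemiring R] (f : MvPolynomial σ R) (x : σ → R) : Prop :=
  ∀ i, eval x (pderiv i f) = 0

section CommSemiring

variable [CommSemiring R]

theorem pderiv_bind₁ [Fintype σ] (s : σ → MvPolynomial τ R) (i : τ) (p : MvPolynomial σ R) :
    pderiv i (bind₁ s p) = ∑ j, bind₁ s (pderiv j p) * pderiv i (s j) := by
  classical
  induction p using MvPolynomial.induction_on with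
  | C a => simp
  | add p r hp hr => simp [hp, hr, Finset.sum_add_distrib, add_mul]
  | mul_X p j hp =>
    simp [hp, pderiv_X, Pi.single_apply, Finset.sum_add_distrib, add_mul, apply_ite, ite_mul,
      Finset.mul_sum, mul_assoc]

theorem isSingularAt_mul_mul {x : σ → R} {p₁ p₂ p₃ : MvPolynomial σ R}
    (h : eval x p₁ = 0 ∧ eval x p₂ = 0 ∨ eval x p₁ = 0 ∧ eval x p₃ = 0 ∨
      eval x p₂ = 0 ∧ eval x p₃ = 0) :
    IsSingularAt (p₁ * p₂ * p₃) x := by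
  intro i
  simp only [pderiv_mul, map_add, map_mul]
  rcases h with ⟨h₁, h₂⟩ | ⟨h₁, h₂⟩ | ⟨h₁, h₂⟩ <;> simp [h₁, h₂]

theorem IsHomogeneous.eval_piSingle_one [Fintype σ] [DecidableEq σ] {p : MvPolynomial σ R}
    {n : ℕ} (hp : p.IsHomogeneous n) (m : σ) :
    eval (Pi.single m 1) p = coeff (Finsupp.single m n) p := by
  rw [eval_eq', Finset.sum_eq_single (Finsupp.single m n)]
  · simp [Pi.single_apply, Finsupp.single_apply]
  · intro d hd hne
    obtain ⟨j, hjm, hj⟩ : ∃ j ≠ m, d j ≠ 0 := by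
      by_contra! h
      have hd' : d = Finsupp.single m (d m) := by
        ext j
        by_cases hj : j = m <;> simp [hj, h]
      have hdeg := not_imp_comm.mp hp.coeff_eq_zero (mem_support_iff.mp hd)
      rw [hd', Finsupp.degree_single] at hdeg
      exact hne (hd'.trans (by rw [hdeg]))
    rw [Finset.prod_eq_zero (Finset.mem_univ j) (by simp [hjm, hj]), mul_zero]
  · simp_all

section LinearForm

variable [Fintype σ]

noncomputable def linearForm (c : σ → R) : MvPolynomial σ R := ∑ i, C (c i) * X i

@[simp]
theorem eval_linearForm (c x : σ → R) : eval x (linearForm c) = c ⬝ᵥ x := by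
  simp [linearForm, dotProduct]

@[simp]
theorem pderiv_linearForm (c : σ → R) (i : σ) : pderiv i (linearForm c) = C (c i) := by
  classical
  simp [linearForm, pderiv_X, Pi.single_apply]

theorem isHomogeneous_linearForm (c : σ → R) : (linearForm c).IsHomogeneous 1 :=
  IsHomogeneous.sum _ _ _ fun i _ => isHomogeneous_C_mul_X (c i) i

theorem linearForm_ne_zero {c : σ → R} (hc : c ≠ 0) : linearForm c ≠ 0 := by
  obtain ⟨i, hi⟩ := Function.ne_iff.mp hc
  intro h
  exact hi (by simpa using congrArg (pderiv i) h)

end LinearForm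

variable [Fintype ι]

noncomputable def substLinear (q : ι → σ → R) : MvPolynomial σ R →ₐ[R] MvPolynomial ι R :=
  bind₁ fun j => linearForm fun m => q m j

theorem eval_substLinear (q : ι → σ → R) (x : ι → R) (p : MvPolynomial σ R) :
    eval x (substLinear q p) = eval (∑ m, x m • q m) p := by
  have hx : (fun j => eval x (linearForm fun m => q m j)) = ∑ m, x m • q m := by
    ext j
    simp [dotProduct, mul_comm]
  exact (eval₂Hom_bind₁ (RingHom.id R) x _ p).trans (congrArg (fun y => eval y p) hx)

theorem IsHomogeneous.substLinear {p : MvPolynomial σ R} {n : ℕ} (hp : p.IsHomogeneous n)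
    (q : ι → σ → R) : (substLinear q p).IsHomogeneous n := by
  have h := hp.aeval (fun j => linearForm fun m => q m j) fun j => isHomogeneous_linearForm _
  rwa [one_mul] at h

theorem pderiv_substLinear [Fintype σ] (q : ι → σ → R) (i : ι) (p : MvPolynomial σ R) :
    pderiv i (substLinear q p) = ∑ j, substLinear q (pderiv j p) * C (q i j) := by
  simp [substLinear, pderiv_bind₁]

theorem IsSingularAt.substLinear_piSingle [Fintype σ] [DecidableEq ι] {q : ι → σ → R}
    {p : MvPolynomial σ R} {m : ι} (hp : IsSingularAt p (q m)) :
    IsSingularAt (substLinear q p) (Pi.single m 1) := by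
  intro i
  simp [pderiv_substLinear, eval_substLinear, Pi.single_apply, hp _]

end CommSemiring

theorem IsHomogeneous.coeff_single_add_single_eq_zero [CommRing R] [IsDomain R] [CharZero R]
    [Fintype σ] [DecidableEq σ] {g : MvPolynomial σ R} {n : ℕ} (hg : g.IsHomogeneous (n + 1))
    {m : σ} (hsing : IsSingularAt g (Pi.single m 1)) (i : σ) :
    coeff (Finsupp.single m n + Finsupp.single i 1) g = 0 := by
  have h := hsing i
  rw [(hg.pderiv (i := i)).eval_piSingle_one, coeff_pderiv] at h
  exact (mul_eq_zero.mp h).resolve_right (Nat.cast_add_one_ne_zero _)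

end MvPolynomial

namespace Finsupp

theorem exists_eq_single_add_single {σ : Type*} {d : σ →₀ ℕ} {n : ℕ} (hd : d.degree = n + 1)
    {m : σ} (hm : n ≤ d m) : ∃ i, d = single m n + single i 1 := by
  obtain ⟨e, rfl⟩ : ∃ e, d = single m n + e := le_iff_exists_add.mp (single_le_iff.mpr hm)
  rw [map_add, degree_single, Nat.add_left_cancel_iff] at hd
  obtain ⟨i, rfl⟩ : e ∈ Set.range (single · 1) := range_single_one.ge hd
  exact ⟨i, rfl⟩

theorem exists_eq_single_add_single_or_forall_eq_one {d : Fin 3 →₀ ℕ} (hd : d.degree = 3) :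
    (∃ m i, d = single m 2 + single i 1) ∨ ∀ j, d j = 1 := by
  by_cases h : ∃ m, 2 ≤ d m
  · obtain ⟨m, hm⟩ := h
    exact Or.inl ⟨m, exists_eq_single_add_single hd hm⟩
  · push Not at h
    rw [degree_eq_sum, Fin.sum_univ_three] at hd
    have := h 0
    have := h 1
    have := h 2
    refine Or.inr fun j => ?_
    fin_cases j <;> simp only [Fin.zero_eta, Fin.mk_one, Fin.reduceFinMk, Fin.isValue] <;> omega

end Finsupp

namespace MvPolynomial

theorem IsHomogeneous.eq_zero_of_isSingularAt_piSingle {R : Type*} [CommRing R] [IsDomain R]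
    [CharZero R] {g : MvPolynomial (Fin 3) R} (hg : g.IsHomogeneous 3)
    (hsing : ∀ m, IsSingularAt g (Pi.single m 1)) {a : Fin 3 → R}
    (ha : ∀ m, a m ≠ 0) (hga : eval a g = 0) : g = 0 := by
  have hsupp : ∀ d ∈ g.support, ∀ j, d j = 1 := by
    intro d hd
    have hdeg := not_imp_comm.mp hg.coeff_eq_zero (mem_support_iff.mp hd)
    rcases Finsupp.exists_eq_single_add_single_or_forall_eq_one hdeg with ⟨m, i, rfl⟩ | h
    · exact absurd (hg.coeff_single_add_single_eq_zero (hsing m) i) (mem_support_iff.mp hd)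
    · exact h
  by_contra hg0
  obtain ⟨d, hd⟩ := support_nonempty.mpr hg0
  rw [eval_eq', Finset.sum_eq_single d] at hga
  · simp only [hsupp d hd, pow_one, mul_eq_zero, mem_support_iff.mp hd, false_or] at hga
    exact Finset.prod_ne_zero_iff.mpr (fun m _ => ha m) hga
  · exact fun d' hd' hne =>
      absurd (Finsupp.ext fun j => (hsupp d' hd' j).trans (hsupp d hd j).symm) hne
  · exact fun h => absurd hd h

end MvPolynomial

theorem Submodule.span_pair_ne_top {K V : Type*} [DivisionRing K] [AddCommGroup V] [Module K V]
    [FiniteDimensional K V] (h : 2 < finrank K V) (u v : V) : span K {u, v} ≠ ⊤ := by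
  classical
  intro htop
  have hle := finrank_span_finset_le_card (R := K) ({u, v} : Finset V)
  rw [Finset.coe_pair, Set.finrank, htop, finrank_top] at hle
  have := Finset.card_le_two (a := u) (b := v)
  omega

theorem exists_ne_zero_forall_dotProduct_eq_zero {K σ : Type*} [Field K] [Fintype σ]
    [DecidableEq σ] {W : Submodule K (σ → K)} (hW : W ≠ ⊤) : ∃ c ≠ 0, ∀ v ∈ W, c ⬝ᵥ v = 0 := by
  obtain ⟨φ, hφ, hWφ⟩ := Submodule.exists_dual_map_eq_bot_of_lt_top hW.lt_top inferInstance
  refine ⟨(dotProductEquiv K σ).symm φ, by simpa using hφ, fun v hv => ?_⟩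
  have hφv : φ v ∈ W.map φ := Submodule.mem_map_of_mem hv
  rw [hWφ, Submodule.mem_bot] at hφv
  rw [← hφv, ← dotProductEquiv_apply_apply, LinearEquiv.apply_symm_apply]

theorem exists_mem_span_pair_of_eq_zero {R V : Type*} [Semiring R] [AddCommMonoid V] [Module R V]
    (a : Fin 3 → R) (v : Fin 3 → V) {k : Fin 3} (hk : a k = 0) :
    ∃ i j, i ≠ j ∧ ∑ m, a m • v m ∈ Submodule.span R {v i, v j} := by
  rw [Fin.sum_univ_three]
  fin_cases k
  · exact ⟨1, 2, by decide, Submodule.mem_span_pair.mpr ⟨a 1, a 2, by simp_all⟩⟩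
  · exact ⟨0, 2, by decide, Submodule.mem_span_pair.mpr ⟨a 0, a 2, by simp_all⟩⟩
  · exact ⟨0, 1, by decide, Submodule.mem_span_pair.mpr ⟨a 0, a 1, by simp_all⟩⟩

section PlaneCubics

variable {K : Type*} [Field K] {z : Fin 3 → K} {q : Fin 3 → Fin 3 → K}

theorem eq_zero_of_isSingularAt_of_linearIndependent [CharZero K] (hq : LinearIndependent K q)
    (hz : ∀ i j, i ≠ j → z ∉ Submodule.span K {q i, q j}) {f : MvPolynomial (Fin 3) K}
    (hf : f.IsHomogeneous 3) (hfz : eval z f = 0) (hsing : ∀ m, IsSingularAt f (q m)) :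
    f = 0 := by
  have hspan : ∀ y, ∃ x : Fin 3 → K, ∑ m, x m • q m = y := fun y =>
    (Submodule.mem_span_range_iff_exists_fun K).mp
      (hq.span_eq_top_of_card_eq_finrank (by simp) ▸ Submodule.mem_top)
  obtain ⟨a, rfl⟩ := hspan z
  have ha : ∀ m, a m ≠ 0 := fun m ham =>
    have ⟨i, j, hij, hmem⟩ := exists_mem_span_pair_of_eq_zero a q ham
    hz i j hij hmem
  have hg : substLinear q f = 0 :=
    (hf.substLinear q).eq_zero_of_isSingularAt_piSingle (fun m => (hsing m).substLinear_piSingle)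
      ha (by rwa [eval_substLinear])
  refine MvPolynomial.funext fun y => ?_
  obtain ⟨x, rfl⟩ := hspan y
  rw [← eval_substLinear, hg, map_zero, map_zero]

theorem exists_singular_cubic_of_linearForms {a b c : Fin 3 → K} (ha : a ≠ 0) (hb : b ≠ 0)
    (hc : c ≠ 0) (hz : a ⬝ᵥ z = 0)
    (hq : ∀ m, a ⬝ᵥ q m = 0 ∧ b ⬝ᵥ q m = 0 ∨ a ⬝ᵥ q m = 0 ∧ c ⬝ᵥ q m = 0 ∨
      b ⬝ᵥ q m = 0 ∧ c ⬝ᵥ q m = 0) :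
    ∃ f : MvPolynomial (Fin 3) K, f ≠ 0 ∧ f.IsHomogeneous 3 ∧ eval z f = 0 ∧
      ∀ m, IsSingularAt f (q m) :=
  ⟨linearForm a * linearForm b * linearForm c,
    mul_ne_zero (mul_ne_zero (linearForm_ne_zero ha) (linearForm_ne_zero hb))
      (linearForm_ne_zero hc),
    ((isHomogeneous_linearForm a).mul (isHomogeneous_linearForm b)).mul
      (isHomogeneous_linearForm c),
    by simp [hz], fun m => isSingularAt_mul_mul (by simpa using hq m)⟩

theorem exists_singular_cubic_of_not_linearIndependent (hq : ¬ LinearIndependent K q) :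
    ∃ f : MvPolynomial (Fin 3) K, f ≠ 0 ∧ f.IsHomogeneous 3 ∧ eval z f = 0 ∧
      ∀ m, IsSingularAt f (q m) := by
  have hspan : Submodule.span K (Set.range q) ≠ ⊤ := fun htop =>
    hq (linearIndependent_of_top_le_span_of_card_eq_finrank htop.ge (by simp))
  obtain ⟨c, hc, hcq⟩ := exists_ne_zero_forall_dotProduct_eq_zero hspan
  obtain ⟨d, hd, hdz⟩ := exists_ne_zero_dotProduct_eq_zero z
  have hcq' : ∀ m, c ⬝ᵥ q m = 0 := fun m => hcq _ (Submodule.subset_span ⟨m, rfl⟩)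
  exact exists_singular_cubic_of_linearForms hd hc hc hdz fun m => by simp [hcq']

theorem exists_singular_cubic_of_mem_span_pair {i j : Fin 3} (hij : i ≠ j)
    (hz : z ∈ Submodule.span K {q i, q j}) :
    ∃ f : MvPolynomial (Fin 3) K, f ≠ 0 ∧ f.IsHomogeneous 3 ∧ eval z f = 0 ∧
      ∀ m, IsSingularAt f (q m) := by
  obtain ⟨k, hk⟩ : ∃ k, ∀ m, m = i ∨ m = j ∨ m = k :=
    (by decide : ∀ i j : Fin 3, i ≠ j → ∃ k, ∀ m, m = i ∨ m = j ∨ m = k) i j hij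
  have line (u v : Fin 3 → K) : ∃ c ≠ 0, ∀ w ∈ Submodule.span K {u, v}, c ⬝ᵥ w = 0 :=
    exists_ne_zero_forall_dotProduct_eq_zero (Submodule.span_pair_ne_top (by simp) u v)
  have mem (u v w : Fin 3 → K) (hw : w = u ∨ w = v) : w ∈ Submodule.span K {u, v} :=
    Submodule.subset_span hw
  obtain ⟨a, ha, ha'⟩ := line (q i) (q j)
  obtain ⟨b, hb, hb'⟩ := line (q i) (q k)
  obtain ⟨c, hc, hc'⟩ := line (q j) (q k)
  refine exists_singular_cubic_of_linearForms ha hb hc (ha' z hz) fun m => ?_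
  rcases hk m with rfl | rfl | rfl
  · exact Or.inl ⟨ha' _ (mem _ _ _ (.inl rfl)), hb' _ (mem _ _ _ (.inl rfl))⟩
  · exact Or.inr (Or.inl ⟨ha' _ (mem _ _ _ (.inr rfl)), hc' _ (mem _ _ _ (.inl rfl))⟩)
  · exact Or.inr (Or.inr ⟨hb' _ (mem _ _ _ (.inr rfl)), hc' _ (mem _ _ _ (.inr rfl))⟩)

end PlaneCubics

theorem singular_cubic_through_point_iff
    {K : Type*} [Field K] [CharZero K]
    (z : Fin 3 → K) (q : Fin 3 → (Fin 3 → K)) :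
    (∃ f : MvPolynomial (Fin 3) K, f ≠ 0 ∧ f.IsHomogeneous 3 ∧
        eval z f = 0 ∧
        ∀ (i : Fin 3) (m : Fin 3), eval (q m) (pderiv i f) = 0) ↔
      (¬ LinearIndependent K q ∨
        ∃ i j : Fin 3, i ≠ j ∧ z ∈ Submodule.span K {q i, q j}) := by
  constructor
  · rintro ⟨f, hf0, hf, hfz, hsing⟩
    by_contra! h
    exact hf0 (eq_zero_of_isSingularAt_of_linearIndependent h.1 h.2 hf hfz fun m i => hsing i m)
  · intro h
    obtain ⟨f, hf0, hf, hfz, hsing⟩ := h.elim exists_singular_cubic_of_not_linearIndependent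
      fun ⟨i, j, hij, hz⟩ => exists_singular_cubic_of_mem_span_pair hij hz
    exact ⟨f, hf0, hf, hfz, fun i m => hsing m i⟩
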